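/- arXiv:1612.04801 — 4 statements merged into one kernel-verified Lean document; each statement's English description precedes it below -/
import Mathlib

section
/- Let f: T → T' be an injective morphism of necklaces with |V_{T'} - J_{T'}| - |V_T - J_T| = 1 (a type (i) morphism). Then the induced functor P₁(f): {0,1}^N → {0,1}^{N+1}, where N = |V_T - J_T|, is a cubical coface functor: there exist j ∈ {1,...,N+1} and ε ∈ {0,1} such that P₁(f)(s_1,...,s_N) = (s_1,...,s_{j-1}, ε, s_j,...,s_N). Moreover ε = 1 if J_{T'} is a proper subset of f(J_T) and ε = 0 if J_{T'} = f(J_T). -/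
/-! Combinatorial model of necklaces (wedges of simplices glued end to end),
encoded by the totally ordered vertex set `Fin (m+1)` together with the
subset `J` of joints (containing the first and last vertex); beads are the
intervals between consecutive joints. -/

structure Necklace where
  m : ℕ
  J : Finset (Fin (m + 1))
  zero_mem : 0 ∈ J
  last_mem : Fin.last m ∈ J

namespace Necklace

/-- Two vertices lie in a common bead. -/
def SameBead (T : Necklace) (v w : Fin (T.m + 1)) : Prop :=
  ∃ a b : Fin (T.m + 1), a ∈ T.J ∧ b ∈ T.J ∧ (∀ c ∈ T.J, c ≤ a ∨ b ≤ c) ∧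
    a ≤ v ∧ v ≤ b ∧ a ≤ w ∧ w ≤ b

/-- A morphism of necklaces: a vertex-level monotone map preserving the first
and last vertices and mapping each bead into a single bead.  (Such data is
equivalent to a simplicial map of necklaces preserving endpoints.) -/
structure Hom (T T' : Necklace) where
  f : Fin (T.m + 1) → Fin (T'.m + 1)
  mono : Monotone f
  map_zero : f 0 = 0
  map_last : f (Fin.last T.m) = Fin.last T'.m
  bead : ∀ v w, SameBead T v w → SameBead T' (f v) (f w)

/-- Identity morphism. -/
def Hom.id (T : Necklace) : Hom T T :=
  ⟨_root_.id, monotone_id, rfl, rfl, fun _ _ h => h⟩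

/-- Composition of morphisms of necklaces. -/
def Hom.comp {T T' T'' : Necklace} (g : Hom T' T'') (h : Hom T T') : Hom T T'' :=
  ⟨g.f ∘ h.f, g.mono.comp h.mono,
    by simp [Function.comp, h.map_zero, g.map_zero],
    by simp [Function.comp, h.map_last, g.map_last],
    fun v w hb => g.bead _ _ (h.bead v w hb)⟩

/-- The set of non-joint vertices. -/
def nonJoints (T : Necklace) : Finset (Fin (T.m + 1)) := Finset.univ \ T.J

/-- The number of non-joint vertices, `N = |V_T - J_T|`. -/
def N (T : Necklace) : ℕ := T.nonJoints.card

/-- Enumeration of the non-joint vertices in increasing order. -/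
noncomputable def enum (T : Necklace) : Fin T.N ≃o {x // x ∈ T.nonJoints} :=
  T.nonJoints.orderIsoOfFin rfl

/-- The subset of vertices encoded by a cube-vertex `s : Fin (N T) → Bool`
(the joints together with the non-joints whose coordinate is `true`). -/
noncomputable def subsetOf (T : Necklace) (s : Fin T.N → Bool) : Finset (Fin (T.m + 1)) :=
  T.J ∪ (Finset.univ.filter (fun i => s i = true)).image (fun i => (T.enum i : Fin (T.m + 1)))

/-- The functor `P₁(g) : {0,1}^{N T} → {0,1}^{N T'}` induced by a morphism of
necklaces, expressed on vertices of the cubes via indicator sequences. -/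
noncomputable def P1 {T T' : Necklace} (g : Hom T T') (s : Fin T.N → Bool) :
    Fin T'.N → Bool :=
  fun i' => decide ((T'.enum i' : Fin (T'.m + 1)) ∈ (T.subsetOf s).image g.f)

/-- Type (i) morphisms: injective with `|V' - J'| = |V - J| + 1`. -/
def TypeI {T T' : Necklace} (g : Hom T T') : Prop :=
  Function.Injective g.f ∧ T'.N = T.N + 1

/-- Type (ii) morphisms: a wedge of identities and exactly one simplicial
codegeneracy; vertex-theoretically, a surjection collapsing exactly one pair of
consecutive vertices, not both of which are joints, mapping joints bijectively
onto joints. -/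
def TypeII {T T' : Necklace} (g : Hom T T') : Prop :=
  Function.Surjective g.f ∧ Finset.image g.f T.J = T'.J ∧ Set.InjOn g.f (T.J : Set _) ∧
  ∃ v : Fin T.m, g.f v.castSucc = g.f v.succ ∧ ¬(v.castSucc ∈ T.J ∧ v.succ ∈ T.J) ∧
    ∀ a b, g.f a = g.f b → a = b ∨ ({a, b} : Finset _) = {v.castSucc, v.succ}

/-- Type (iii) morphisms: collapse of a `Δ¹` bead (both of whose endpoints are
joints) to a point, injective elsewhere. -/
def TypeIII {T T' : Necklace} (g : Hom T T') : Prop :=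
  Function.Surjective g.f ∧ Finset.image g.f T.J = T'.J ∧
  ∃ v : Fin T.m, g.f v.castSucc = g.f v.succ ∧ v.castSucc ∈ T.J ∧ v.succ ∈ T.J ∧
    ∀ a b, g.f a = g.f b → a = b ∨ ({a, b} : Finset _) = {v.castSucc, v.succ}

/-- `g` is an identity morphism of necklaces. -/
def IsIdentity {T T' : Necklace} (g : Hom T T') : Prop :=
  T = T' ∧ ∀ v, ((g.f v : ℕ) = (v : ℕ))

/-- Compositions of morphisms of types (i), (ii), (iii). -/
inductive IsGenComp : ∀ {T T' : Necklace}, Hom T T' → Prop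
  | of {T T'} (g : Hom T T') : TypeI g ∨ TypeII g ∨ TypeIII g → IsGenComp g
  | comp {T T' T''} (g : Hom T T') (g' : Hom T' T'') :
      IsGenComp g → IsGenComp g' → IsGenComp (g'.comp g)

/-- Compositions of `n` morphisms of type (i). -/
inductive IsCompI : ∀ {T T' : Necklace}, Hom T T' → ℕ → Prop
  | of {T T'} (g : Hom T T') : TypeI g → IsCompI g 1
  | comp {T T' T''} (g : Hom T T') (g' : Hom T' T'') {n n' : ℕ} :
      IsCompI g n → IsCompI g' n' → IsCompI (g'.comp g) (n + n')

/-- The standard simplex `Δᵖ` regarded as a necklace with one bead. -/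
def simplex (p : ℕ) : Necklace :=
  ⟨p, {0, Fin.last p}, by simp, by simp⟩

end Necklace

/-! An injective morphism `g` is strictly monotone, and since every joint of `T'` is the image of
a joint of `T`, it carries non-joints to non-joints; for a type (i) morphism it misses exactly one
non-joint `u` of `T'`. Read through the enumerations, `g` therefore induces a strictly monotone
map `Fin N → Fin (N + 1)` avoiding the index `j` of `u`, which must be `j.succAbove`. Hence
`P₁(g)(s)` copies `s` into the slots other than `j` and puts `u ∈ g(J_T)` into slot `j`. -/

theorem Fin.eq_succAbove_of_strictMono {n : ℕ} {φ : Fin n → Fin (n + 1)} (hφ : StrictMono φ)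
    {j : Fin (n + 1)} (hj : ∀ k, φ k ≠ j) : φ = j.succAbove := by
  rw [Finset.orderEmbOfFin_unique (s := {j}ᶜ) (by simp [Finset.card_compl])
    (by simpa using hj) hφ, Finset.orderEmbOfFin_compl_singleton_eq_succAboveOrderEmb]
  rfl

namespace Necklace

variable {T T' : Necklace}

theorem mem_nonJoints {v : Fin (T.m + 1)} : v ∈ T.nonJoints ↔ v ∉ T.J := by
  simp [nonJoints]

theorem J_subset_subsetOf (s : Fin T.N → Bool) : T.J ⊆ T.subsetOf s :=
  Finset.subset_union_left

theorem enum_mem_subsetOf (s : Fin T.N → Bool) (k : Fin T.N) :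
    (T.enum k : Fin (T.m + 1)) ∈ T.subsetOf s ↔ s k = true := by
  have hk : (T.enum k : Fin (T.m + 1)) ∉ T.J := mem_nonJoints.mp (T.enum k).2
  simp [subsetOf, hk]

theorem mem_image_subsetOf_iff {α : Type*} [DecidableEq α] {F : Fin (T.m + 1) → α} {x : α}
    (hx : x ∉ T.nonJoints.image F) (s : Fin T.N → Bool) :
    x ∈ (T.subsetOf s).image F ↔ x ∈ T.J.image F := by
  refine ⟨fun h => ?_, fun h => Finset.image_subset_image (T.J_subset_subsetOf s) h⟩
  obtain ⟨v, -, rfl⟩ := Finset.mem_image.mp h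
  by_cases hv : v ∈ T.J
  · exact Finset.mem_image_of_mem F hv
  · exact absurd (Finset.mem_image_of_mem F (mem_nonJoints.mpr hv)) hx

theorem SameBead.le_or_le {v w c : Fin (T.m + 1)} (h : T.SameBead v w) (hc : c ∈ T.J) :
    c ≤ v ∨ w ≤ c := by
  obtain ⟨a, b, -, -, hab, hav, -, -, hwb⟩ := h
  exact (hab c hc).imp (·.trans hav) hwb.trans

theorem Hom.exists_mem_J_map_eq (g : Hom T T') {c' : Fin (T'.m + 1)} (hc' : c' ∈ T'.J) :
    ∃ c ∈ T.J, g.f c = c' := by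
  by_cases hlast : c' = Fin.last T'.m
  · exact ⟨_, T.last_mem, g.map_last.trans hlast.symm⟩
  -- Otherwise `c'` lies between the images of two consecutive joints `a < b`, which span a bead.
  obtain ⟨a, ha, ha_max⟩ := (T.J.filter (g.f · ≤ c')).exists_max_image _root_.id
    ⟨0, by simp [T.zero_mem, g.map_zero]⟩
  obtain ⟨b, hb, hb_min⟩ := (T.J.filter (c' < g.f ·)).exists_min_image _root_.id
    ⟨Fin.last T.m, by simp [T.last_mem, g.map_last, Fin.lt_last_iff_ne_last.mpr hlast]⟩
  rw [Finset.mem_filter] at ha hb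
  have hab : a ≤ b := (g.mono.reflect_lt (ha.2.trans_lt hb.2)).le
  have hbead : T.SameBead a b :=
    ⟨a, b, ha.1, hb.1, fun c hc => (le_or_gt (g.f c) c').imp
      (ha_max c <| Finset.mem_filter.mpr ⟨hc, ·⟩) (hb_min c <| Finset.mem_filter.mpr ⟨hc, ·⟩),
      le_rfl, hab, hab, le_rfl⟩
  rcases (g.bead a b hbead).le_or_le hc' with h | h
  · exact ⟨a, ha.1, le_antisymm ha.2 h⟩
  · exact absurd hb.2 h.not_gt

theorem Hom.map_mem_nonJoints (g : Hom T T') (hinj : Function.Injective g.f)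
    {v : Fin (T.m + 1)} (hv : v ∈ T.nonJoints) : g.f v ∈ T'.nonJoints := by
  refine mem_nonJoints.mpr fun h => ?_
  obtain ⟨c, hc, hcv⟩ := g.exists_mem_J_map_eq h
  exact mem_nonJoints.mp hv (hinj hcv ▸ hc)

theorem Hom.image_J_subset (g : Hom T T') (hinj : Function.Injective g.f) :
    T.J.image g.f ⊆ T'.J ∪ (T'.nonJoints \ T.nonJoints.image g.f) := by
  intro y hy
  obtain ⟨c, hc, rfl⟩ := Finset.mem_image.mp hy
  by_cases h : g.f c ∈ T'.J
  · exact Finset.mem_union_left _ h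
  · refine Finset.mem_union_right _ (Finset.mem_sdiff.mpr ⟨mem_nonJoints.mpr h, ?_⟩)
    rw [hinj.mem_finset_image]
    exact fun hc' => mem_nonJoints.mp hc' hc

theorem TypeI.exists_sdiff_image_eq_singleton {g : Hom T T'} (hg : TypeI g) :
    ∃ u, T'.nonJoints \ T.nonJoints.image g.f = {u} := by
  refine Finset.card_eq_one.mp ?_
  rw [Finset.card_sdiff_of_subset
      (Finset.image_subset_iff.mpr fun v hv => g.map_mem_nonJoints hg.1 hv),
    Finset.card_image_of_injective _ hg.1]
  have : T'.N = T.N + 1 := hg.2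
  simp only [N] at this
  omega

noncomputable def Hom.nonJointIndex (g : Hom T T') (hinj : Function.Injective g.f) :
    Fin T.N → Fin T'.N :=
  fun k => T'.enum.symm ⟨g.f (T.enum k), g.map_mem_nonJoints hinj (T.enum k).2⟩

theorem Hom.enum_nonJointIndex (g : Hom T T') (hinj : Function.Injective g.f) (k : Fin T.N) :
    (T'.enum (g.nonJointIndex hinj k) : Fin (T'.m + 1)) = g.f (T.enum k) := by
  simp [nonJointIndex]

theorem Hom.strictMono_nonJointIndex (g : Hom T T') (hinj : Function.Injective g.f) :
    StrictMono (g.nonJointIndex hinj) :=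
  fun _ _ h => T'.enum.symm.strictMono <|
    (g.mono.strictMono_of_injective hinj) (T.enum.strictMono h)

end Necklace

open Necklace in
/-- For a type (i) morphism of necklaces `g : T → T'` (injective
with `|V'-J'| = |V-J| + 1`), the induced map `P₁(g) : {0,1}^N → {0,1}^{N+1}` is a
cubical coface map, inserting the constant `ε` in some slot `j`; moreover `ε = 1`
when `J_{T'} ⊊ g(J_T)` and `ε = 0` when `J_{T'} = g(J_T)`. -/
theorem P1_of_typeI_is_coface {T T' : Necklace} (g : Necklace.Hom T T')
    (hg : Necklace.TypeI g) :
    ∃ (j : Fin (T.N + 1)) (ε : Bool),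
      (∀ (s : Fin T.N → Bool) (i : Fin T'.N),
          Necklace.P1 g s i = (Fin.insertNth (α := fun _ => Bool) j ε s) (Fin.cast hg.2 i)) ∧
      (T'.J ⊂ Finset.image g.f T.J → ε = true) ∧
      (T'.J = Finset.image g.f T.J → ε = false) := by
  have hinj := hg.1
  obtain ⟨u, hu⟩ := hg.exists_sdiff_image_eq_singleton
  obtain ⟨huN, hu_img⟩ := Finset.mem_sdiff.mp (hu ▸ Finset.mem_singleton_self u)
  set j := Fin.cast hg.2 (T'.enum.symm ⟨u, huN⟩)
  have hφ : Fin.cast hg.2 ∘ g.nonJointIndex hinj = j.succAbove := by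
    refine Fin.eq_succAbove_of_strictMono
      ((Fin.cast_strictMono hg.2).comp (g.strictMono_nonJointIndex hinj)) fun k hk => ?_
    refine hu_img (Finset.mem_image.mpr ⟨T.enum k, (T.enum k).2, ?_⟩)
    rw [← g.enum_nonJointIndex hinj k, (Fin.cast_injective hg.2) hk, T'.enum.apply_symm_apply]
  refine ⟨j, decide (u ∈ T.J.image g.f), fun s i => ?_, fun hlt => ?_, fun heq => ?_⟩
  · rcases j.eq_self_or_eq_succAbove (Fin.cast hg.2 i) with hi | ⟨k, hk⟩
    · obtain rfl : i = T'.enum.symm ⟨u, huN⟩ := Fin.cast_injective hg.2 hi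
      rw [hi, Fin.insertNth_apply_same, P1, T'.enum.apply_symm_apply]
      exact decide_eq_decide.mpr (mem_image_subsetOf_iff hu_img s)
    · obtain rfl : g.nonJointIndex hinj k = i := Fin.cast_injective hg.2 (hk ▸ congrFun hφ k)
      rw [hk, Fin.insertNth_apply_succAbove, P1, g.enum_nonJointIndex]
      simp only [hinj.mem_finset_image, enum_mem_subsetOf, Bool.decide_eq_true]
  · obtain ⟨y, hy, hyJ⟩ := Finset.exists_of_ssubset hlt
    have hyu := g.image_J_subset hinj hy
    rw [hu, Finset.mem_union, Finset.mem_singleton] at hyu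
    exact decide_eq_true (hyu.resolve_left hyJ ▸ hy)
  · exact decide_eq_false fun h => mem_nonJoints.mp huN (heq ▸ h)
end

section
/- Let f be a morphism of necklaces that collapses a bead equal to Δ^1 to a point (a type (iii) morphism): f: Δ^{n_1} ∨ ... ∨ Δ^{n_{p-1}} ∨ Δ^1 ∨ Δ^{n_{p+1}} ∨ ... ∨ Δ^{n_k} → Δ^{n_1} ∨ ... ∨ Δ^{n_{p-1}} ∨ Δ^{n_{p+1}} ∨ ... ∨ Δ^{n_k}, injective on all other beads. Then P₁(f): {0,1}^N → {0,1}^N is the identity functor. -/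
open Necklace in
/-- For a type (iii) morphism of necklaces `g` (the collapse of
a `Δ¹` bead, both of whose endpoints `v, v+1` are joints, to a point, injective
elsewhere), the source and target have the same number `N` of non-joint
vertices, and the induced map `P₁(g) : {0,1}^N → {0,1}^N` is the identity. -/
theorem P1_of_typeIII_is_identity {T T' : Necklace}
    (g : Necklace.Hom T T') (v : Fin T.m)
    (hsurj : Function.Surjective g.f)
    (hJ : Finset.image g.f T.J = T'.J)
    (hcol : g.f v.castSucc = g.f v.succ)
    (hvJ : v.castSucc ∈ T.J) (hvJ' : v.succ ∈ T.J)
    (hinj2 : ∀ a b, g.f a = g.f b → a = b ∨ ({a, b} : Finset _) = {v.castSucc, v.succ}) :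
    ∃ hN : T.N = T'.N,
      ∀ (s : Fin T'.N → Bool) (i : Fin T'.N),
        Necklace.P1 g (fun t => s (Fin.cast hN t)) i = s i := by
  classical
  -- Key injectivity: collapsing only identifies the two joints `v.castSucc, v.succ`.
  have key : ∀ a b, a ∉ T.J → g.f a = g.f b → a = b := by
    intro a b ha hab
    rcases hinj2 a b hab with h | h
    · exact h
    · exfalso
      have : a ∈ ({a, b} : Finset _) := by simp
      rw [h] at this
      rcases Finset.mem_insert.1 this with h' | h'
      · exact ha (h' ▸ hvJ)
      · exact ha ((Finset.mem_singleton.1 h') ▸ hvJ')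
  -- non-joints map to non-joints
  have hnj : ∀ x, x ∉ T.J → g.f x ∉ T'.J := by
    intro x hx hx'
    rw [← hJ] at hx'
    obtain ⟨j, hj, hjx⟩ := Finset.mem_image.1 hx'
    have := key x j hx hjx.symm
    exact hx (this ▸ hj)
  -- surjectivity onto non-joints
  have hsurjnj : ∀ y, y ∉ T'.J → ∃ x, x ∉ T.J ∧ g.f x = y := by
    intro y hy
    obtain ⟨x, hx⟩ := hsurj y
    refine ⟨x, fun hxJ => hy ?_, hx⟩
    rw [← hJ]
    exact Finset.mem_image.2 ⟨x, hxJ, hx⟩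
  have memnj : ∀ (x : Fin (T.m + 1)), x ∈ T.nonJoints ↔ x ∉ T.J := by
    intro x; simp [Necklace.nonJoints]
  have memnj' : ∀ (x : Fin (T'.m + 1)), x ∈ T'.nonJoints ↔ x ∉ T'.J := by
    intro x; simp [Necklace.nonJoints]
  have hN : T.N = T'.N := by
    unfold Necklace.N
    refine Finset.card_bij (fun x _ => g.f x) ?_ ?_ ?_
    · intro x hx
      exact (memnj' _).2 (hnj x ((memnj x).1 hx))
    · intro a ha b hb hab
      exact key a b ((memnj a).1 ha) hab
    · intro y hy
      obtain ⟨x, hx, hxy⟩ := hsurjnj y ((memnj' y).1 hy)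
      exact ⟨x, (memnj x).2 hx, hxy⟩
  refine ⟨hN, ?_⟩
  -- The two strictly monotone enumerations
  have hmono1 : StrictMono (fun t : Fin T.N => g.f (T.enum t : Fin (T.m + 1))) := by
    intro t t' htt
    have h1 : (T.enum t : Fin (T.m + 1)) < (T.enum t' : Fin (T.m + 1)) :=
      T.enum.strictMono htt
    have h2 : g.f (T.enum t) ≤ g.f (T.enum t') := g.mono h1.le
    rcases lt_or_eq_of_le h2 with h | h
    · exact h
    · exfalso
      have hnj1 : ((T.enum t : Fin (T.m + 1)) ∉ T.J) := (memnj _).1 (T.enum t).2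
      have := key _ _ hnj1 h
      exact absurd this h1.ne
  have hmono2 : StrictMono (fun t : Fin T.N => (T'.enum (Fin.cast hN t) : Fin (T'.m + 1))) := by
    intro t t' htt
    refine T'.enum.strictMono ?_
    rw [Fin.lt_def, Fin.coe_cast, Fin.coe_cast]
    exact htt
  have hrange : Set.range (fun t : Fin T.N => g.f (T.enum t : Fin (T.m + 1)))
      = Set.range (fun t : Fin T.N => (T'.enum (Fin.cast hN t) : Fin (T'.m + 1))) := by
    ext y
    simp only [Set.mem_range]
    constructor
    · rintro ⟨t, rfl⟩
      have hy : g.f (T.enum t) ∈ T'.nonJoints :=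
        (memnj' _).2 (hnj _ ((memnj _).1 (T.enum t).2))
      refine ⟨Fin.cast hN.symm (T'.enum.symm ⟨_, hy⟩), ?_⟩
      simp
    · rintro ⟨t, rfl⟩
      have hy : ((T'.enum (Fin.cast hN t) : Fin (T'.m + 1))) ∉ T'.J :=
        (memnj' _).1 (T'.enum (Fin.cast hN t)).2
      obtain ⟨x, hx, hxy⟩ := hsurjnj _ hy
      exact ⟨T.enum.symm ⟨x, (memnj x).2 hx⟩, by simp [hxy]⟩
  haveI : WellFoundedLT (Fin T.N) := inferInstance
  have hfun := (StrictMono.range_inj hmono1 hmono2).1 hrange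
  have heq : ∀ t : Fin T.N, g.f (T.enum t : Fin (T.m + 1))
      = (T'.enum (Fin.cast hN t) : Fin (T'.m + 1)) := fun t => congrFun hfun t
  intro s i
  have hmem : ((T'.enum i : Fin (T'.m + 1)) ∈
      (T.subsetOf fun t => s (Fin.cast hN t)).image g.f) ↔ s i = true := by
    constructor
    · intro h
      obtain ⟨x, hx, hxy⟩ := Finset.mem_image.1 h
      rcases Finset.mem_union.1 hx with hxJ | hxE
      · exfalso
        have : (T'.enum i : Fin (T'.m + 1)) ∈ T'.J := by
          rw [← hJ]; exact Finset.mem_image.2 ⟨x, hxJ, hxy⟩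
        exact ((memnj' _).1 (T'.enum i).2) this
      · obtain ⟨t, ht, htx⟩ := Finset.mem_image.1 hxE
        have hst : s (Fin.cast hN t) = true := (Finset.mem_filter.1 ht).2
        have : (T'.enum (Fin.cast hN t) : Fin (T'.m + 1)) = (T'.enum i : Fin (T'.m + 1)) := by
          rw [← heq t, htx, hxy]
        have hti : Fin.cast hN t = i := by
          have := T'.enum.injective (Subtype.ext this)
          exact this
        rwa [hti] at hst
    · intro hs
      refine Finset.mem_image.2 ⟨(T.enum (Fin.cast hN.symm i) : Fin (T.m + 1)), ?_, ?_⟩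
      · refine Finset.mem_union_right _ (Finset.mem_image.2 ⟨Fin.cast hN.symm i, ?_, rfl⟩)
        simp only [Finset.mem_filter, Finset.mem_univ, true_and]
        simpa using hs
      · rw [heq]
        simp
  unfold Necklace.P1
  cases hsi : s i
  · simp only [decide_eq_false_iff_not]
    intro h
    rw [hmem.1 h] at hsi
    exact Bool.noConfusion hsi
  · simp [hmem.2 hsi]
end

section
/- Every non-identity morphism in the category Nec of necklaces (objects: necklaces in preferred form; morphisms: simplicial maps preserving first and last vertices) is a composition of morphisms of the following three types: (i) injective morphisms f: T → T' with |V_{T'} - J_{T'}| - |V_T - J_T| = 1; (ii) morphisms f_1 ∨ ... ∨ f_k where exactly one f_p is a simplicial codegeneracy and the rest are identities; (iii) morphisms collapsing a single Δ^1 bead to a point and injective on the other beads. -/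
/-! A morphism `g : T → T'` sends the joints of `T` onto a set containing all joints of `T'`.
Induct on `T.m + N T'`. If a joint of `T` lands on a non-joint `k` of `T'`, then `g` factors
through `T'` with `k` promoted to a joint, followed by a type (i) map. Otherwise, if `g` identifies
two adjacent vertices, it factors through the codegeneracy collapsing them (type (ii), or (iii) when
both are joints); if `g` misses a vertex, that vertex is a non-joint and `g` factors through the
coface omitting it, a type (i) map; and a bijective `g` with `g(J_T) = J_T'` is the identity. -/

namespace Fin

variable {n : ℕ}

theorem val_predAbove (p : Fin n) (i : Fin (n + 1)) :
    (p.predAbove i : ℕ) = if (p : ℕ) < i then (i : ℕ) - 1 else i := by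
  rcases lt_or_ge p.castSucc i with h | h
  · rw [predAbove_of_castSucc_lt _ _ h, if_pos (by simpa [lt_def] using h), val_pred]
  · rw [predAbove_of_le_castSucc _ _ h, if_neg (by simpa [le_def] using h), coe_castPred]

theorem val_succAbove (p : Fin (n + 1)) (i : Fin n) :
    (p.succAbove i : ℕ) = if (i : ℕ) < p then (i : ℕ) else i + 1 := by
  rcases lt_or_ge i.castSucc p with h | h
  · rw [succAbove_of_castSucc_lt _ _ h, if_pos (by simpa [lt_def] using h), val_castSucc]
  · rw [succAbove_of_le_castSucc _ _ h, if_neg (by simpa [le_def] using h), val_succ]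

theorem gc_succAbove_succ_predAbove (p : Fin n) : GaloisConnection p.succ.succAbove p.predAbove :=
  fun a b => by
    simp only [le_def, val_succAbove, val_predAbove, val_succ]
    split_ifs <;> omega

theorem gc_predAbove_succAbove_castSucc (p : Fin n) :
    GaloisConnection p.predAbove p.castSucc.succAbove := fun a b => by
  simp only [le_def, val_succAbove, val_predAbove, val_castSucc]
  split_ifs <;> omega

theorem eq_or_pair_eq_of_predAbove_eq {p : Fin n} {a b : Fin (n + 1)}
    (h : p.predAbove a = p.predAbove b) :
    a = b ∨ ({a, b} : Finset _) = {p.castSucc, p.succ} := by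
  have h := congrArg Fin.val h
  simp only [val_predAbove] at h
  by_cases hab : a = b
  · exact .inl hab
  have hab : (a : ℕ) ≠ b := fun h => hab (Fin.ext h)
  have : (a = p.castSucc ∧ b = p.succ) ∨ (a = p.succ ∧ b = p.castSucc) := by
    simp only [Fin.ext_iff, val_castSucc, val_succ]
    split_ifs at h <;> omega
  rcases this with ⟨rfl, rfl⟩ | ⟨rfl, rfl⟩
  · exact .inr rfl
  · exact .inr (Finset.pair_comm _ _)

end Fin

theorem Monotone.exists_apply_castSucc_eq_apply_succ {α : Type*} [PartialOrder α] {m : ℕ}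
    {f : Fin (m + 1) → α} (hf : Monotone f) (hinj : ¬ Function.Injective f) :
    ∃ i : Fin m, f i.castSucc = f i.succ := by
  simp only [Function.Injective, not_forall] at hinj
  obtain ⟨x, y, hfxy, hne⟩ := hinj
  wlog hlt : x < y generalizing x y
  · exact this y x hfxy.symm (Ne.symm hne) (lt_of_le_of_ne (not_lt.1 hlt) (Ne.symm hne))
  refine ⟨⟨x, hlt.trans_le (Fin.le_last y)⟩, le_antisymm (hf (Fin.castSucc_le_succ _)) ?_⟩
  calc f (Fin.succ _) ≤ f y := hf (Fin.le_def.2 (by rw [Fin.val_succ]; exact Fin.lt_def.1 hlt))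
    _ = f x := hfxy.symm

namespace Necklace

variable {T T' T'' S : Necklace}

theorem sameBead_iff {v w : Fin (T.m + 1)} :
    T.SameBead v w ↔ ∀ c ∈ T.J, (c ≤ v ∧ c ≤ w) ∨ (v ≤ c ∧ w ≤ c) := by
  constructor
  · rintro ⟨a, b, -, -, hab, hav, hvb, haw, hwb⟩ c hc
    exact (hab c hc).imp (fun h => ⟨h.trans hav, h.trans haw⟩)
      fun h => ⟨hvb.trans h, hwb.trans h⟩
  · intro h
    let below := T.J.filter fun c => c ≤ v ∧ c ≤ w
    let above := T.J.filter fun c => v ≤ c ∧ w ≤ c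
    have hbelow : below.Nonempty := ⟨0, by simp [below, T.zero_mem]⟩
    have habove : above.Nonempty := ⟨Fin.last _, by simp [above, T.last_mem, Fin.le_last]⟩
    obtain ⟨haJ, hav, haw⟩ := Finset.mem_filter.1 (below.max'_mem hbelow)
    obtain ⟨hbJ, hvb, hwb⟩ := Finset.mem_filter.1 (above.min'_mem habove)
    refine ⟨_, _, haJ, hbJ, fun c hc => ?_, hav, hvb, haw, hwb⟩
    exact (h c hc).imp (fun h => below.le_max' c (Finset.mem_filter.2 ⟨hc, h⟩))
      fun h => above.min'_le c (Finset.mem_filter.2 ⟨hc, h⟩)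

theorem sameBead_refl (v : Fin (T.m + 1)) : T.SameBead v v :=
  sameBead_iff.2 fun c _ => (le_total c v).imp (fun h => ⟨h, h⟩) fun h => ⟨h, h⟩

theorem SameBead.symm {v w : Fin (T.m + 1)} : T.SameBead v w → T.SameBead w v :=
  fun ⟨a, b, ha, hb, hab, hav, hvb, haw, hwb⟩ => ⟨a, b, ha, hb, hab, haw, hwb, hav, hvb⟩

theorem N_add_card_J (T : Necklace) : T.N + T.J.card = T.m + 1 := by
  simpa [N, nonJoints] using Finset.card_sdiff_add_card_eq_card (Finset.subset_univ T.J)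

theorem Hom.ext {g h : Hom T T'} (H : g.f = h.f) : g = h := by
  cases g; cases h; cases H; rfl

theorem IsIdentity.eq_id {g : Hom T T} (hg : IsIdentity g) : g = Hom.id T :=
  Hom.ext (funext fun v => Fin.ext (hg.2 v))

/-- Together with `Hom.joints_subset_image`, this shows that morphisms are exactly the monotone
endpoint-preserving maps whose image of the joints contains all joints of the target. -/
def Hom.ofJoints (f : Fin (T.m + 1) → Fin (T'.m + 1)) (mono : Monotone f) (map_zero : f 0 = 0)
    (map_last : f (Fin.last T.m) = Fin.last T'.m) (hJ : T'.J ⊆ T.J.image f) : Hom T T' where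
  f := f
  mono := mono
  map_zero := map_zero
  map_last := map_last
  bead v w hvw := sameBead_iff.2 fun c hc => by
    obtain ⟨j, hj, rfl⟩ := Finset.mem_image.1 (hJ hc)
    exact (sameBead_iff.1 hvw j hj).imp (.imp (mono ·) (mono ·)) (.imp (mono ·) (mono ·))

theorem Hom.joints_subset_image (g : Hom T T') : T'.J ⊆ T.J.image g.f := by
  intro c hc
  by_contra hcg
  have hne : ∀ j ∈ T.J, g.f j ≠ c := fun j hj h => hcg (Finset.mem_image.2 ⟨j, hj, h⟩)
  let below := Finset.univ.filter (g.f · < c)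
  let above := Finset.univ.filter (c < g.f ·)
  have hbelow : below.Nonempty :=
    ⟨0, by
      simpa [below, g.map_zero] using (Fin.zero_le c).lt_of_ne (g.map_zero ▸ hne 0 T.zero_mem)⟩
  have habove : above.Nonempty :=
    ⟨Fin.last _, by
      simpa [above, g.map_last] using (Fin.le_last c).lt_of_ne' (g.map_last ▸ hne _ T.last_mem)⟩
  have ha : g.f (below.max' hbelow) < c := (Finset.mem_filter.1 (below.max'_mem hbelow)).2
  have hb : c < g.f (above.min' habove) := (Finset.mem_filter.1 (above.min'_mem habove)).2
  have hab := g.mono.reflect_lt (ha.trans hb)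
  -- no joint of `T` lies between the last vertex sent below `c` and the first one sent above it
  have hbead : T.SameBead (below.max' hbelow) (above.min' habove) := sameBead_iff.2 fun j hj => by
    rcases (hne j hj).lt_or_gt with h | h
    · have hj : j ≤ below.max' hbelow := below.le_max' j (by simpa [below] using h)
      exact .inl ⟨hj, hj.trans hab.le⟩
    · have hj : above.min' habove ≤ j := above.min'_le j (by simpa [above] using h)
      exact .inr ⟨hab.le.trans hj, hj⟩
  rcases sameBead_iff.1 (g.bead _ _ hbead) c hc with h | h
  · exact h.1.not_gt ha
  · exact h.2.not_gt hb

theorem Hom.exists_eq_comp_of_strictMono (g : Hom T T') (e : Hom S T') (he : StrictMono e.f)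
    (heJ : ∀ j ∈ S.J, e.f j ∈ T'.J) (hg : ∀ x, g.f x ∈ Set.range e.f) :
    ∃ g' : Hom T S, g = e.comp g' := by
  choose f hf using hg
  refine ⟨⟨f, fun x y hxy => he.le_iff_le.1 (by rw [hf, hf]; exact g.mono hxy),
    he.injective (by rw [hf, g.map_zero, e.map_zero]),
    he.injective (by rw [hf, g.map_last, e.map_last]),
    fun v w hvw => sameBead_iff.2 fun j hj => ?_⟩, Hom.ext (funext fun x => (hf x).symm)⟩
  simpa only [← hf, he.le_iff_le] using sameBead_iff.1 (g.bead v w hvw) _ (heJ j hj)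

/-- `u x` and `l y` are the greatest and the least vertex of the fibres of `c` over `x` and `y`. -/
theorem sameBead_of_galoisConnection {c : Fin (T.m + 1) → Fin (S.m + 1)}
    (hc : ∀ j ∈ T.J, c j ∈ S.J) {l u : Fin (S.m + 1) → Fin (T.m + 1)}
    (hl : GaloisConnection l c) (hu : GaloisConnection c u) {x y : Fin (S.m + 1)}
    (hxy : x < y) (h : S.SameBead x y) : T.SameBead (u x) (l y) := by
  refine sameBead_iff.2 fun j hj => ?_
  rcases sameBead_iff.1 h (c j) (hc j hj) with ⟨hjx, -⟩ | ⟨-, hyj⟩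
  · refine .inl ⟨(hu j x).1 hjx, le_of_not_ge fun hyj => ?_⟩
    exact ((hl y j).1 hyj).not_gt (hjx.trans_lt hxy)
  · refine .inr ⟨le_of_not_ge fun hju => ?_, (hl y j).2 hyj⟩
    exact ((hu j x).2 hju).not_gt (hxy.trans_le hyj)

theorem Hom.exists_eq_comp_of_galoisConnection (g : Hom T T') (c : Hom T S)
    (hc : Function.Surjective c.f) (hcJ : ∀ j ∈ T.J, c.f j ∈ S.J)
    {l u : Fin (S.m + 1) → Fin (T.m + 1)} (hl : GaloisConnection l c.f)
    (hu : GaloisConnection c.f u) (hg : ∀ a b, c.f a = c.f b → g.f a = g.f b) :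
    ∃ g' : Hom S T', g = g'.comp c := by
  have hcl : ∀ y, c.f (l y) = y := fun y => by obtain ⟨z, rfl⟩ := hc y; exact hl.u_l_u_eq_u z
  have hcu : ∀ y, c.f (u y) = y := fun y => by obtain ⟨z, rfl⟩ := hc y; exact hu.l_u_l_eq_l z
  have hgl : ∀ y, g.f (u y) = g.f (l y) := fun y => hg _ _ ((hcu y).trans (hcl y).symm)
  refine ⟨⟨g.f ∘ l, g.mono.comp hl.monotone_l, ?_, ?_, fun x y hxy => ?_⟩,
    Hom.ext (funext fun x => hg _ _ (hcl (c.f x)).symm)⟩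
  · simpa [g.map_zero] using hg (l 0) 0 (by rw [hcl, c.map_zero])
  · simpa [g.map_last] using hg (l _) (Fin.last _) (by rw [hcl, c.map_last])
  rcases lt_trichotomy x y with h | rfl | h
  · simpa only [Function.comp, hgl] using
      g.bead _ _ (sameBead_of_galoisConnection hcJ hl hu h hxy)
  · exact sameBead_refl _
  · simpa only [Function.comp, hgl] using
      (g.bead _ _ (sameBead_of_galoisConnection hcJ hl hu h hxy.symm)).symm

theorem typeII_or_typeIII_of_fibers (c : Hom T S) (hc : Function.Surjective c.f)
    (hJ : T.J.image c.f = S.J) (v : Fin T.m) (hv : c.f v.castSucc = c.f v.succ)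
    (hfib : ∀ a b, c.f a = c.f b → a = b ∨ ({a, b} : Finset _) = {v.castSucc, v.succ}) :
    TypeII c ∨ TypeIII c := by
  by_cases hvJ : v.castSucc ∈ T.J ∧ v.succ ∈ T.J
  · exact .inr ⟨hc, hJ, v, hv, hvJ.1, hvJ.2, hfib⟩
  refine .inl ⟨hc, hJ, fun a ha b hb hab => (hfib a b hab).resolve_right fun hpair => hvJ ?_,
    v, hv, hvJ, hfib⟩
  have hsub : ({a, b} : Finset _) ⊆ T.J :=
    Finset.insert_subset ha (Finset.singleton_subset_iff.2 hb)
  rw [hpair] at hsub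
  exact ⟨hsub (by simp), hsub (by simp)⟩

theorem Hom.exists_eq_comp_typeII_or_typeIII (g : Hom T T') (hg : ¬ Function.Injective g.f) :
    ∃ (S : Necklace) (c : Hom T S) (g' : Hom S T'),
      (TypeII c ∨ TypeIII c) ∧ S.m < T.m ∧ g = g'.comp c := by
  obtain ⟨v, hv⟩ := g.mono.exists_apply_castSucc_eq_apply_succ hg
  obtain ⟨_ | n, J, h0, hl⟩ := T
  · exact v.elim0
  let S : Necklace := ⟨n, J.image v.predAbove,
    Finset.mem_image.2 ⟨0, h0, Fin.predAbove_right_zero⟩,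
    Finset.mem_image.2 ⟨_, hl, Fin.predAbove_right_last⟩⟩
  -- the codegeneracy `σ_v`, identifying the vertices `v` and `v + 1`
  let c : Hom _ S := Hom.ofJoints v.predAbove (Fin.predAbove_right_monotone v)
    Fin.predAbove_right_zero Fin.predAbove_right_last subset_rfl
  have hfib : ∀ a b, c.f a = c.f b → a = b ∨ ({a, b} : Finset _) = {v.castSucc, v.succ} :=
    fun a b => Fin.eq_or_pair_eq_of_predAbove_eq
  have hgc : ∀ a b, c.f a = c.f b → g.f a = g.f b := fun a b hab => by
    rcases hfib a b hab with rfl | hpair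
    · rfl
    have ha : a ∈ ({v.castSucc, v.succ} : Finset _) := hpair ▸ by simp
    have hb : b ∈ ({v.castSucc, v.succ} : Finset _) := hpair ▸ by simp
    simp only [Finset.mem_insert, Finset.mem_singleton] at ha hb
    rcases ha with rfl | rfl <;> rcases hb with rfl | rfl <;> simp [hv]
  obtain ⟨g', rfl⟩ := g.exists_eq_comp_of_galoisConnection c (Fin.predAbove_surjective v)
    (fun j hj => Finset.mem_image_of_mem _ hj) (Fin.gc_succAbove_succ_predAbove v)
    (Fin.gc_predAbove_succAbove_castSucc v) hgc
  exact ⟨S, c, g', typeII_or_typeIII_of_fibers c (Fin.predAbove_surjective v) rfl v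
    (Fin.predAbove_castSucc_self v |>.trans (Fin.predAbove_succ_self v).symm) hfib,
    Nat.lt_succ_self n, rfl⟩

theorem Hom.exists_eq_comp_typeI_of_not_surjective (g : Hom T T')
    (hg : ¬ Function.Surjective g.f) :
    ∃ (S : Necklace) (g' : Hom T S) (e : Hom S T'), TypeI e ∧ g = e.comp g' := by
  obtain ⟨u, hu⟩ : ∃ u, ∀ x, g.f x ≠ u := by simpa [Function.Surjective] using hg
  have huJ : u ∉ T'.J := fun h => by
    obtain ⟨x, -, hx⟩ := Finset.mem_image.1 (g.joints_subset_image h)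
    exact hu x hx
  obtain ⟨_ | n, J', h0, hl⟩ := T'
  · exact (huJ (Fin.fin_one_eq_zero u ▸ h0)).elim
  have hu0 : u ≠ 0 := fun h => huJ (h ▸ h0)
  have hul : u ≠ Fin.last _ := fun h => huJ (h ▸ hl)
  let S : Necklace := ⟨n, Finset.univ.filter (u.succAbove · ∈ J'),
    by simpa [Fin.succAbove_ne_zero_zero hu0] using h0,
    by simpa [Fin.succAbove_ne_last_last hul] using hl⟩
  have hSJ : ∀ j, j ∈ S.J ↔ u.succAbove j ∈ J' := by simp [S]
  let e : Hom S _ := Hom.ofJoints u.succAbove (Fin.strictMono_succAbove u).monotone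
    (Fin.succAbove_ne_zero_zero hu0) (Fin.succAbove_ne_last_last hul) fun j hj => by
      obtain ⟨z, rfl⟩ := Fin.exists_succAbove_eq (ne_of_mem_of_not_mem hj huJ)
      exact Finset.mem_image_of_mem _ ((hSJ z).2 hj)
  obtain ⟨g', rfl⟩ := g.exists_eq_comp_of_strictMono e (Fin.strictMono_succAbove u)
    (fun j => (hSJ j).1) fun x => Fin.exists_succAbove_eq (hu x)
  have hcard : S.J.card = J'.card := by
    rw [← Finset.card_image_of_injective _ (Fin.succAbove_right_injective (p := u))]
    exact congrArg Finset.card (Finset.Subset.antisymm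
      (Finset.image_subset_iff.2 fun j => (hSJ j).1) e.joints_subset_image)
  refine ⟨S, g', e, ⟨Fin.succAbove_right_injective, ?_⟩, rfl⟩
  have := N_add_card_J S
  have := N_add_card_J ⟨n + 1, J', h0, hl⟩
  have : J'.card ≤ n + 1 := by simpa using Finset.card_lt_univ_of_notMem huJ
  simp only [S] at *
  omega

theorem Hom.exists_eq_comp_typeI_of_not_image_subset (g : Hom T T')
    (hg : ¬ T.J.image g.f ⊆ T'.J) :
    ∃ (S : Necklace) (g' : Hom T S) (e : Hom S T'), TypeI e ∧ g = e.comp g' := by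
  obtain ⟨k, hkg, hkJ⟩ := Finset.not_subset.1 hg
  let S : Necklace := ⟨T'.m, insert k T'.J, Finset.mem_insert_of_mem T'.zero_mem,
    Finset.mem_insert_of_mem T'.last_mem⟩
  let e : Hom S T' := Hom.ofJoints (fun x => x) monotone_id rfl rfl fun j hj =>
    Finset.mem_image.2 ⟨j, Finset.mem_insert_of_mem hj, rfl⟩
  let g' : Hom T S := Hom.ofJoints g.f g.mono g.map_zero g.map_last
    (Finset.insert_subset hkg g.joints_subset_image)
  refine ⟨S, g', e, ⟨Function.injective_id, ?_⟩, rfl⟩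
  have := N_add_card_J S
  have := N_add_card_J T'
  have : S.J.card = T'.J.card + 1 := Finset.card_insert_of_notMem hkJ
  have : S.m = T'.m := rfl
  omega

theorem isIdentity_of_bijective (g : Hom T T') (hg : Function.Bijective g.f)
    (hJ : T.J.image g.f = T'.J) : IsIdentity g := by
  have hval : ∀ v, (g.f v : ℕ) = v := Fin.coe_orderIso_apply
    (StrictMono.orderIsoOfSurjective g.f (g.mono.strictMono_of_injective hg.1) hg.2)
  refine ⟨?_, hval⟩
  obtain ⟨m, J, h0, hl⟩ := T
  obtain ⟨m', J', h0', hl'⟩ := T'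
  obtain rfl : m = m' := by simpa using Fintype.card_of_bijective hg
  have hid : g.f = id := funext fun v => Fin.ext (hval v)
  rw [hid, Finset.image_id] at hJ
  subst hJ
  rfl

theorem isIdentity_or_isGenComp_comp {g : Hom T T'} {h : Hom T' T''}
    (hg : IsIdentity g ∨ IsGenComp g) (hh : IsIdentity h ∨ IsGenComp h) :
    IsIdentity (h.comp g) ∨ IsGenComp (h.comp g) := by
  rcases hg with hg | hg
  · obtain rfl := hg.1
    rwa [hg.eq_id]
  rcases hh with hh | hh
  · obtain rfl := hh.1
    rw [hh.eq_id]
    exact .inr hg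
  · exact .inr (.comp g h hg hh)

theorem isIdentity_or_isGenComp {T T' : Necklace} (g : Hom T T') :
    IsIdentity g ∨ IsGenComp g := by
  by_cases hJ : T.J.image g.f ⊆ T'.J
  · by_cases hinj : Function.Injective g.f
    · by_cases hsurj : Function.Surjective g.f
      · exact .inl
          (isIdentity_of_bijective g ⟨hinj, hsurj⟩ (hJ.antisymm g.joints_subset_image))
      · obtain ⟨S, g', e, he, rfl⟩ := g.exists_eq_comp_typeI_of_not_surjective hsurj
        exact isIdentity_or_isGenComp_comp (isIdentity_or_isGenComp g') (.inr (.of e (.inl he)))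
    · obtain ⟨S, c, g', hc, hS, rfl⟩ := g.exists_eq_comp_typeII_or_typeIII hinj
      exact isIdentity_or_isGenComp_comp (.inr (.of c (.inr hc))) (isIdentity_or_isGenComp g')
  · obtain ⟨S, g', e, he, rfl⟩ := g.exists_eq_comp_typeI_of_not_image_subset hJ
    exact isIdentity_or_isGenComp_comp (isIdentity_or_isGenComp g') (.inr (.of e (.inl he)))
termination_by T.m + T'.N
decreasing_by
  all_goals first | omega | (have := he.2; omega)

end Necklace

open Necklace in
/-- Every non-identity morphism in the category of necklaces is
a composition of morphisms of types (i), (ii) and (iii). -/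
theorem necklace_hom_factorization {T T' : Necklace} (g : Necklace.Hom T T')
    (hg : ¬ Necklace.IsIdentity g) : Necklace.IsGenComp g :=
  (isIdentity_or_isGenComp g).resolve_left hg
end

section
/- Let f: T → Δ^p be a type (i) morphism of necklaces (injective with |V_{Δ^p} - J_{Δ^p}| - |V_T - J_T| = 1) whose source T has more than one bead. Then T has exactly two beads and the image of f is the subnecklace Δ^{p-i} ∨ Δ^i of Δ^p, for some 0 < i < p, whose first bead is spanned by vertices {0,1,...,p-i} and whose second bead is spanned by {p-i,...,p}. -/
/-! Count non-joints: `N(Δᵖ) = p - 1` and `N(T) = m + 1 - |J_T|`, while injectivity gives `m ≤ p`.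
The type (i) condition `N(Δᵖ) = N(T) + 1` together with `|J_T| ≥ 3` then forces `m = p` and
`|J_T| = 3`, so `g` is a bijection and the image of `J_T` is a three-element set containing the
endpoints `0` and `p`. -/

theorem Finset.exists_eq_insert_insert_singleton_of_card_eq_three {α : Type*} [DecidableEq α]
    {s : Finset α} {a b : α} (hs : s.card = 3) (ha : a ∈ s) (hb : b ∈ s) (hab : a ≠ b) :
    ∃ c, c ≠ a ∧ c ≠ b ∧ s = {a, c, b} := by
  have hsub : ({a, b} : Finset α) ⊆ s := Finset.insert_subset ha (Finset.singleton_subset_iff.2 hb)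
  have hrest : (s \ {a, b}).card = 1 := by
    rw [Finset.card_sdiff_of_subset hsub, hs, Finset.card_pair hab]
  obtain ⟨c, hc⟩ := Finset.card_eq_one.mp hrest
  have hc_mem : c ∈ s \ {a, b} := hc ▸ Finset.mem_singleton_self c
  simp only [Finset.mem_sdiff, Finset.mem_insert, Finset.mem_singleton, not_or] at hc_mem
  obtain ⟨hcs, hca, hcb⟩ := hc_mem
  refine ⟨c, hca, hcb, (Finset.eq_of_subset_of_card_le ?_ ?_).symm⟩
  · simp [Finset.insert_subset_iff, ha, hb, hcs]
  · rw [hs, Finset.card_insert_of_notMem (by simp [hab, Ne.symm hca]),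
      Finset.card_pair hcb]

namespace Necklace

theorem N_eq (T : Necklace) : T.N = T.m + 1 - T.J.card := by
  simp [N, nonJoints, Finset.card_sdiff_of_subset (Finset.subset_univ _)]

theorem simplex_N (p : ℕ) : (simplex p).N = p - 1 := by
  rw [N_eq]
  cases p with
  | zero => rfl
  | succ p =>
    have h0l : (0 : Fin (p + 2)) ≠ Fin.last (p + 1) := (Fin.last_pos).ne
    simp [simplex, Finset.card_pair h0l]

theorem Hom.m_le_of_injective {T T' : Necklace} (g : Hom T T') (hg : Function.Injective g.f) :
    T.m ≤ T'.m := by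
  simpa using Fintype.card_le_of_injective g.f hg

end Necklace

open Necklace in
theorem typeI_to_simplex_image_general {p : ℕ} {T : Necklace}
    (g : Necklace.Hom T (Necklace.simplex p))
    (hg : Necklace.TypeI g) (hbeads : 3 ≤ T.J.card) :
    T.J.card = 3 ∧ Function.Surjective g.f ∧
      ∃ j : Fin (p + 1), 0 < (j : ℕ) ∧ (j : ℕ) < p ∧
        Finset.image g.f T.J = {0, j, Fin.last p} := by
  obtain ⟨hinj, hN⟩ := hg
  have hm : T.m ≤ p := g.m_le_of_injective hinj
  have hJ : T.J.card ≤ T.m + 1 := by simpa using T.J.card_le_univ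
  rw [simplex_N, N_eq] at hN
  obtain ⟨hJ3, hmp, hp⟩ : T.J.card = 3 ∧ T.m = p ∧ 0 < p := by omega
  have hcard : Fintype.card (Fin (T.m + 1)) = Fintype.card (Fin (p + 1)) := by rw [hmp]
  have hsurj : Function.Surjective g.f :=
    ((Fintype.bijective_iff_injective_and_card g.f).mpr ⟨hinj, hcard⟩).2
  obtain ⟨j, hj0, hjl, himage⟩ :=
    Finset.exists_eq_insert_insert_singleton_of_card_eq_three
      (by rw [Finset.card_image_of_injective _ hinj, hJ3])
      (g.map_zero ▸ Finset.mem_image_of_mem g.f T.zero_mem)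
      (g.map_last ▸ Finset.mem_image_of_mem g.f T.last_mem)
      (Fin.ext_iff.not.2 (by simp only [Fin.val_zero, Fin.val_last, simplex]; omega))
  refine ⟨hJ3, hsurj, j, ?_, ?_, himage⟩
  · exact Nat.pos_of_ne_zero (Fin.val_ne_iff.2 hj0)
  · exact Fin.lt_last_iff_ne_last.2 hjl

open Necklace in
/-- A type (i) morphism of necklaces `f : T → Δᵖ` whose source
has more than one bead has exactly two beads (i.e. three joints), is surjective on
vertices, and its image is the subnecklace `Δ^{p-i} ∨ Δ^i` of `Δᵖ` for some
`0 < i < p`: the image of the joints is `{0, p - i, p}`. -/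
theorem typeI_to_simplex_image {p : ℕ} (hp : 1 ≤ p) {T : Necklace}
    (g : Necklace.Hom T (Necklace.simplex p))
    (hg : Necklace.TypeI g) (hbeads : 3 ≤ T.J.card) :
    T.J.card = 3 ∧ Function.Surjective g.f ∧
      ∃ j : Fin (p + 1), 0 < (j : ℕ) ∧ (j : ℕ) < p ∧
        Finset.image g.f T.J = {0, j, Fin.last p} :=
  typeI_to_simplex_image_general g hg hbeads
end
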